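/- For every M ≥ 2, the Z^2 Iceberg model I_M satisfies topological strong spatial mixing with gap g = 3. -/

import Mathlib

/-! Glue the two configurations `x` (given on `U ∪ S`) and `y` (given on `S ∪ V`) along the
level sets of the distance `D` to `V`: use `y` where `D ≤ 1` and `x` where `D ≥ 2`, but off `S`
replace the values in the shells `D = 1` and `D = 2` by their signs `±1`. Replacing a value by
its sign never violates the constraint `a * b ≥ -1`, and two signs are always compatible, so the
seam between `x` and `y` is harmless off `S`; on `S` the two configurations agree. -/

abbrev Site (d : ℕ) := Fin d → ℤ

def dist1 {d : ℕ} (p q : Site d) : ℕ := ∑ i, (p i - q i).natAbs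

def unitVec {d : ℕ} (i : Fin d) : Site d := fun j => if j = i then 1 else 0

def TSSM {d : ℕ} {A : Type*} (X : Set (Site d → A)) (g : ℕ) : Prop :=
  ∀ U S V : Set (Site d), U.Finite → S.Finite → V.Finite →
    Disjoint U S → Disjoint S V → Disjoint U V →
    (∀ p ∈ U, ∀ q ∈ V, g ≤ dist1 p q) →
    ∀ u s v : Site d → A,
      (∃ x ∈ X, (∀ p ∈ U, x p = u p) ∧ (∀ p ∈ S, x p = s p)) →
      (∃ x ∈ X, (∀ p ∈ S, x p = s p) ∧ (∀ p ∈ V, x p = v p)) →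
      ∃ x ∈ X, (∀ p ∈ U, x p = u p) ∧ (∀ p ∈ S, x p = s p) ∧ ∀ p ∈ V, x p = v p

/-- The ℤ² Iceberg model with alphabet `{-M, …, -1, +1, …, +M}`: adjacent values must
have product at least `-1`. -/
def Iceberg (M : ℕ) : Set (Site 2 → ℤ) :=
  {x | (∀ p : Site 2, x p ≠ 0 ∧ (x p).natAbs ≤ M) ∧
       ∀ (p : Site 2) (i : Fin 2), -1 ≤ x p * x (p + unitVec i)}

namespace Int

theorem neg_one_le_sign_mul {a b : ℤ} (h : -1 ≤ a * b) : -1 ≤ a.sign * b := by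
  rcases Int.lt_trichotomy a 0 with ha | rfl | ha
  · rw [Int.sign_eq_neg_one_of_neg ha]; nlinarith
  · simp
  · rw [Int.sign_eq_one_of_pos ha]; nlinarith

theorem neg_one_le_sign_mul_sign (a b : ℤ) : -1 ≤ a.sign * b.sign := by
  rw [← Int.sign_mul]
  have := (a * b).sign_trichotomy
  omega

theorem neg_one_le_mul_of_eq_or_eq_sign {a b a' b' : ℤ} (h : -1 ≤ a * b)
    (ha : a' = a ∨ a' = a.sign) (hb : b' = b ∨ b' = b.sign) : -1 ≤ a' * b' := by
  have hsign_mul : ∀ {a b : ℤ}, -1 ≤ a * b → -1 ≤ a * b.sign := fun h => by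
    rw [mul_comm] at h ⊢; exact neg_one_le_sign_mul h
  rcases ha with rfl | rfl <;> rcases hb with rfl | rfl
  exacts [h, hsign_mul h, neg_one_le_sign_mul h, neg_one_le_sign_mul_sign a b]

end Int

section Distance

variable {d : ℕ}

theorem dist1_self (p : Site d) : dist1 p p = 0 := by
  simp [dist1]

theorem dist1_triangle (p q r : Site d) : dist1 p r ≤ dist1 p q + dist1 q r := by
  rw [dist1, dist1, dist1, ← Finset.sum_add_distrib]
  exact Finset.sum_le_sum fun i _ => by omega

theorem dist1_add_unitVec_left (p : Site d) (i : Fin d) : dist1 (p + unitVec i) p = 1 := by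
  simp [dist1, unitVec, ite_sub, apply_ite]

theorem dist1_add_unitVec_right (p : Site d) (i : Fin d) : dist1 p (p + unitVec i) = 1 := by
  simp [dist1, unitVec, apply_ite]

/-- Equal to `0` when `V` is empty (`sInf ∅ = 0`). -/
noncomputable def infDist1 (V : Set (Site d)) (p : Site d) : ℕ := sInf (dist1 p '' V)

theorem infDist1_le_dist1 {V : Set (Site d)} (p : Site d) {q : Site d} (hq : q ∈ V) :
    infDist1 V p ≤ dist1 p q :=
  Nat.sInf_le ⟨q, hq, rfl⟩

theorem exists_dist1_eq_infDist1 {V : Set (Site d)} (hV : V.Nonempty) (p : Site d) :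
    ∃ q ∈ V, dist1 p q = infDist1 V p :=
  Nat.sInf_mem (hV.image (dist1 p))

theorem infDist1_le_infDist1_add_dist1 {V : Set (Site d)} (hV : V.Nonempty) (p q : Site d) :
    infDist1 V p ≤ infDist1 V q + dist1 p q := by
  obtain ⟨r, hr, hqr⟩ := exists_dist1_eq_infDist1 hV q
  calc infDist1 V p ≤ dist1 p r := infDist1_le_dist1 p hr
    _ ≤ dist1 p q + dist1 q r := dist1_triangle p q r
    _ = infDist1 V q + dist1 p q := by rw [hqr, add_comm]

def IsLayering (U V : Set (Site d)) (g : ℕ) (D : Site d → ℕ) : Prop :=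
  (∀ p i, D p ≤ D (p + unitVec i) + 1 ∧ D (p + unitVec i) ≤ D p + 1) ∧
    (∀ p ∈ U, g ≤ D p) ∧ ∀ p ∈ V, D p = 0

theorem exists_isLayering {U V : Set (Site d)} {g : ℕ} (hUV : ∀ p ∈ U, ∀ q ∈ V, g ≤ dist1 p q) :
    ∃ D, IsLayering U V g D := by
  rcases V.eq_empty_or_nonempty with rfl | hV
  · exact ⟨fun _ => g, fun _ _ => by simp, fun _ _ => le_rfl, fun _ h => h.elim⟩
  refine ⟨infDist1 V, fun p i => ⟨?_, ?_⟩, fun p hp => ?_, fun p hp => ?_⟩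
  · simpa [dist1_add_unitVec_right] using infDist1_le_infDist1_add_dist1 hV p (p + unitVec i)
  · simpa [dist1_add_unitVec_left] using infDist1_le_infDist1_add_dist1 hV (p + unitVec i) p
  · obtain ⟨q, hq, hpq⟩ := exists_dist1_eq_infDist1 hV p
    exact hpq ▸ hUV p hp q hq
  · simpa [dist1_self] using infDist1_le_dist1 p hp

end Distance

def icebergShift (d M : ℕ) : Set (Site d → ℤ) :=
  {x | (∀ p : Site d, x p ≠ 0 ∧ (x p).natAbs ≤ M) ∧
       ∀ (p : Site d) (i : Fin d), -1 ≤ x p * x (p + unitVec i)}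

section Glue

variable {d : ℕ} (D : Site d → ℕ) (S : Set (Site d)) (x y : Site d → ℤ)

open Classical in
noncomputable def glue (p : Site d) : ℤ :=
  if D p ≤ 1 then (if D p = 0 ∨ p ∈ S then y p else (y p).sign)
  else if 3 ≤ D p ∨ p ∈ S then x p else (x p).sign

variable {D S x y}

theorem glue_of_eq_zero {p : Site d} (hp : D p = 0) : glue D S x y p = y p := by
  simp [glue, hp]

theorem glue_of_three_le {p : Site d} (hp : 3 ≤ D p) : glue D S x y p = x p := by
  simp [glue, hp, show ¬ D p ≤ 1 by omega]

theorem glue_of_mem (hxy : ∀ p ∈ S, x p = y p) {p : Site d} (hp : p ∈ S) :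
    glue D S x y p = x p := by
  unfold glue
  split_ifs <;> simp_all

theorem glue_eq_or_eq_sign_of_le_one {p : Site d} (hp : D p ≤ 1) :
    glue D S x y p = y p ∨ glue D S x y p = (y p).sign := by
  unfold glue
  split_ifs <;> simp

theorem glue_eq_or_eq_sign_of_two_le {p : Site d} (hp : 2 ≤ D p) :
    glue D S x y p = x p ∨ glue D S x y p = (x p).sign := by
  simp only [glue, show ¬ D p ≤ 1 by omega, if_false]
  split_ifs <;> simp

theorem glue_eq_sign_of_notMem {p : Site d} (hp : p ∉ S) (h1 : 1 ≤ D p) (h2 : D p ≤ 2) :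
    ∃ a : ℤ, glue D S x y p = a.sign := by
  by_cases hp1 : D p ≤ 1
  · exact ⟨y p, by simp [glue, hp1, hp, show D p ≠ 0 by omega]⟩
  · exact ⟨x p, by simp [glue, hp1, hp, show ¬ 3 ≤ D p by omega]⟩

theorem neg_one_le_glue_mul_glue (hxy : ∀ p ∈ S, x p = y p) {p q : Site d}
    (hpq : D p ≤ D q + 1) (hqp : D q ≤ D p + 1)
    (hx : -1 ≤ x p * x q) (hy : -1 ≤ y p * y q) : -1 ≤ glue D S x y p * glue D S x y q := by
  wlog hle : D p ≤ D q generalizing p q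
  · rw [mul_comm] at hx hy ⊢
    exact this hqp hpq hx hy (by omega)
  by_cases hq1 : D q ≤ 1
  · exact Int.neg_one_le_mul_of_eq_or_eq_sign hy
      (glue_eq_or_eq_sign_of_le_one (by omega)) (glue_eq_or_eq_sign_of_le_one hq1)
  by_cases hp2 : 2 ≤ D p
  · exact Int.neg_one_le_mul_of_eq_or_eq_sign hx
      (glue_eq_or_eq_sign_of_two_le hp2) (glue_eq_or_eq_sign_of_two_le (by omega))
  -- the interface `D p = 1`, `D q = 2`
  by_cases hpS : p ∈ S
  · exact Int.neg_one_le_mul_of_eq_or_eq_sign hx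
      (Or.inl (glue_of_mem hxy hpS)) (glue_eq_or_eq_sign_of_two_le (by omega))
  by_cases hqS : q ∈ S
  · exact Int.neg_one_le_mul_of_eq_or_eq_sign hy (glue_eq_or_eq_sign_of_le_one (by omega))
      (Or.inl ((glue_of_mem hxy hqS).trans (hxy q hqS)))
  obtain ⟨a, ha⟩ := glue_eq_sign_of_notMem (D := D) (x := x) (y := y) hpS (by omega) (by omega)
  obtain ⟨b, hb⟩ := glue_eq_sign_of_notMem (D := D) (x := x) (y := y) hqS (by omega) (by omega)
  rw [ha, hb]
  exact Int.neg_one_le_sign_mul_sign a b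

theorem glue_mem_icebergShift {M : ℕ} (hx : x ∈ icebergShift d M) (hy : y ∈ icebergShift d M)
    (hxy : ∀ p ∈ S, x p = y p)
    (hD : ∀ p i, D p ≤ D (p + unitVec i) + 1 ∧ D (p + unitVec i) ≤ D p + 1) :
    glue D S x y ∈ icebergShift d M := by
  have sign_alphabet : ∀ {a a' : ℤ}, a ≠ 0 ∧ a.natAbs ≤ M → a' = a ∨ a' = a.sign →
      a' ≠ 0 ∧ a'.natAbs ≤ M := by
    rintro a a' ⟨ha, haM⟩ (rfl | rfl)
    · exact ⟨ha, haM⟩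
    · have := Int.natAbs_pos.mpr ha
      exact ⟨Int.sign_eq_zero_iff_zero.not.mpr ha, by rw [Int.natAbs_sign_of_ne_zero ha]; omega⟩
  refine ⟨fun p => ?_, fun p i => neg_one_le_glue_mul_glue hxy (hD p i).1 (hD p i).2
    (hx.2 p i) (hy.2 p i)⟩
  by_cases hp : D p ≤ 1
  · exact sign_alphabet (hy.1 p) (glue_eq_or_eq_sign_of_le_one hp)
  · exact sign_alphabet (hx.1 p) (glue_eq_or_eq_sign_of_two_le (by omega))

end Glue

theorem icebergShift_tssm (d M : ℕ) : TSSM (icebergShift d M) 3 := by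
  intro U S V _ _ _ _ _ _ hUV u s v ⟨x, hx, hxu, hxs⟩ ⟨y, hy, hys, hyv⟩
  obtain ⟨D, hD, hDU, hDV⟩ := exists_isLayering hUV
  have hxy : ∀ p ∈ S, x p = y p := fun p hp => (hxs p hp).trans (hys p hp).symm
  exact ⟨glue D S x y, glue_mem_icebergShift hx hy hxy hD,
    fun p hp => (glue_of_three_le (hDU p hp)).trans (hxu p hp),
    fun p hp => (glue_of_mem hxy hp).trans (hxs p hp),
    fun p hp => (glue_of_eq_zero (hDV p hp)).trans (hyv p hp)⟩

theorem iceberg_tssm_general (M : ℕ) : TSSM (Iceberg M) 3 :=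
  icebergShift_tssm 2 M

/-- For every `M ≥ 2`, the ℤ² Iceberg model satisfies TSSM with gap `3`. -/
theorem iceberg_tssm (M : ℕ) (hM : 2 ≤ M) : TSSM (Iceberg M) 3 :=
  iceberg_tssm_general M
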